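/- Assume (Lip) and that y ↦ f(x,y) is affine for every x ∈ ℝⁿ. Let q > 0, p ≥ 0, fix ȳ ∈ ℝᵐ, define L̄(x,y,λ) := L(x,y,λ) − (q/2)‖y‖² − (p/2)‖y−ȳ‖², and let y*(x,λ) denote the unique maximizer of L̄(x,·,λ) over Y. Then the map (x,λ) ↦ ∇_{x,λ}L̄(x, y*(x,λ), λ) is Lipschitz on ℝⁿ×ℝᵖ with constant L_A + L_B²/(q+p): for all x₁,x₂ ∈ ℝⁿ and λ₁,λ₂ ∈ ℝᵖ, ‖∇_{x,λ}L̄(x₁,y*(x₁,λ₁),λ₁) − ∇_{x,λ}L̄(x₂,y*(x₂,λ₂),λ₂)‖ ≤ (L_A + L_B²/(q+p))·‖(x₁;λ₁) − (x₂;λ₂)‖, where L_A := L+‖A‖ and L_B := L+‖B‖. (This map is the gradient of Φ̄(x,λ) := max_{y∈Y} L̄(x,y,λ), so Φ̄ is (L_A + L_B²/(q+p))-smooth.) -/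

import Mathlib

open scoped RealInnerProductSpace

noncomputable section

/-- ℝ^d as a Euclidean space. -/
abbrev E (d : ℕ) := EuclideanSpace ℝ (Fin d)

/-- The Lagrangian `L(x,y,λ) = f(x,y) − λᵀ(Ax+By−c)`. -/
def lag {n m p : ℕ} (f : E n → E m → ℝ) (A : E n →L[ℝ] E p) (B : E m →L[ℝ] E p)
    (c : E p) (x : E n) (y : E m) (l : E p) : ℝ :=
  f x y - ⟪l, A x + B y - c⟫

/-- Partial gradient of the Lagrangian with respect to `x`. -/
def gradxL {n m p : ℕ} (f : E n → E m → ℝ) (A : E n →L[ℝ] E p) (B : E m →L[ℝ] E p)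
    (c : E p) (x : E n) (y : E m) (l : E p) : E n :=
  gradient (fun x' => lag f A B c x' y l) x

/-- Partial gradient of the Lagrangian with respect to `y`. -/
def gradyL {n m p : ℕ} (f : E n → E m → ℝ) (A : E n →L[ℝ] E p) (B : E m →L[ℝ] E p)
    (c : E p) (x : E n) (y : E m) (l : E p) : E m :=
  gradient (fun y' => lag f A B c x y' l) y

/-- Partial gradient of the Lagrangian with respect to `λ`. -/
def gradlL {n m p : ℕ} (f : E n → E m → ℝ) (A : E n →L[ℝ] E p) (B : E m →L[ℝ] E p)
    (c : E p) (x : E n) (y : E m) (l : E p) : E p :=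
  gradient (fun l' => lag f A B c x y l') l

/-- Assumption (Lip): all four partial-gradient Lipschitz estimates with constant `L`. -/
def LipGrad {n m : ℕ} (f : E n → E m → ℝ) (L : ℝ) : Prop :=
  (∀ x₁ x₂ y, ‖gradient (fun x => f x y) x₁ - gradient (fun x => f x y) x₂‖ ≤ L * ‖x₁ - x₂‖) ∧
  (∀ x y₁ y₂, ‖gradient (fun x => f x y₁) x - gradient (fun x => f x y₂) x‖ ≤ L * ‖y₁ - y₂‖) ∧
  (∀ x y₁ y₂, ‖gradient (f x) y₁ - gradient (f x) y₂‖ ≤ L * ‖y₁ - y₂‖) ∧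
  (∀ x₁ x₂ y, ‖gradient (f x₁) y - gradient (f x₂) y‖ ≤ L * ‖x₁ - x₂‖)

/-- `w = Prox^α_{φ,Z}(v)`: `w` minimizes `φ(z) + (α/2)‖z − v‖²` over `z ∈ Z`. -/
def IsProx {d : ℕ} (φ : E d → ℝ) (Z : Set (E d)) (α : ℝ) (v w : E d) : Prop :=
  w ∈ Z ∧ ∀ z ∈ Z, φ w + α / 2 * ‖w - v‖ ^ 2 ≤ φ z + α / 2 * ‖z - v‖ ^ 2

/-- Componentwise positive part: the Euclidean projection onto the nonnegative orthant. -/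
def posPart {p : ℕ} (v : E p) : E p := WithLp.toLp 2 (fun i => max 0 (v i))

/-- `Λ` together with its Euclidean projection `PΛ`: either the nonnegative orthant
(with componentwise positive part) or the whole space (with the identity). -/
def LamProj {p : ℕ} (Λ : Set (E p)) (PΛ : E p → E p) : Prop :=
  (Λ = {v : E p | ∀ i, 0 ≤ v i} ∧ ∀ v, PΛ v = posPart v) ∨
  (Λ = Set.univ ∧ ∀ v, PΛ v = v)

/-- The regularized Lagrangian `L̄(x,y,λ) = L(x,y,λ) − (q/2)‖y‖² − (p/2)‖y−ȳ‖²`. -/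
def regLag {n m p : ℕ} (f : E n → E m → ℝ) (A : E n →L[ℝ] E p) (B : E m →L[ℝ] E p)
    (c : E p) (q pp : ℝ) (yc : E m) (x : E n) (y : E m) (l : E p) : ℝ :=
  lag f A B c x y l - q / 2 * ‖y‖ ^ 2 - pp / 2 * ‖y - yc‖ ^ 2


/-! ### Auxiliary lemmas -/

section helpers
variable {F : Type*} [NormedAddCommGroup F] [InnerProductSpace ℝ F] [CompleteSpace F]

lemma HasGradientAt.gradient_eq' {f : F → ℝ} {g : F} {x : F} (h : HasGradientAt f g x) :
    _root_.gradient f x = g :=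
  (h.hasFDerivAt.differentiableAt.hasGradientAt).unique h

lemma hasGradientAt_inner_const (w x : F) : HasGradientAt (fun v => ⟪w, v⟫) w x := by
  have h : HasFDerivAt (fun v : F => ⟪w, v⟫) (innerSL ℝ w) x := (innerSL ℝ w).hasFDerivAt
  have e : (InnerProductSpace.toDual ℝ F) w = innerSL ℝ w := by
    ext v; simp [InnerProductSpace.toDual_apply_apply]
  rw [hasGradientAt_iff_hasFDerivAt, e]; exact h

lemma HasGradientAt.sub'' {f g : F → ℝ} {f' g' : F} {x : F} (hf : HasGradientAt f f' x)
    (hg : HasGradientAt g g' x) : HasGradientAt (fun y => f y - g y) (f' - g') x := by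
  rw [hasGradientAt_iff_hasFDerivAt, map_sub]
  exact hf.hasFDerivAt.sub hg.hasFDerivAt

lemma HasGradientAt.add_const'' {f : F → ℝ} {f' : F} {x : F} (hf : HasGradientAt f f' x)
    (c : ℝ) : HasGradientAt (fun y => f y + c) f' x := by
  rw [hasGradientAt_iff_hasFDerivAt]
  exact hf.hasFDerivAt.add_const c

lemma HasGradientAt.const_sub'' {f : F → ℝ} {f' : F} {x : F} (hf : HasGradientAt f f' x)
    (c : ℝ) : HasGradientAt (fun y => c - f y) (-f') x := by
  rw [hasGradientAt_iff_hasFDerivAt, map_neg]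
  exact hf.hasFDerivAt.const_sub c

lemma affine_inner_grad {f : F → ℝ} (u v : F) (hd : DifferentiableAt ℝ f u)
    (haff : ∀ t : ℝ, f (u + t • (v - u)) = f u + t * (f v - f u)) :
    f v - f u = ⟪_root_.gradient f u, v - u⟫ := by
  have hg : HasFDerivAt f ((InnerProductSpace.toDual ℝ F) (_root_.gradient f u)) u :=
    hd.hasGradientAt.hasFDerivAt
  have hline : HasDerivAt (fun t : ℝ => u + t • (v - u)) (v - u) 0 := by
    simpa using ((hasDerivAt_id (0:ℝ)).smul_const (v - u)).const_add u
  have h1 : HasDerivAt (fun t : ℝ => f (u + t • (v - u)))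
      ((InnerProductSpace.toDual ℝ F) (_root_.gradient f u) (v - u)) 0 := by
    have hg' : HasFDerivAt f ((InnerProductSpace.toDual ℝ F) (_root_.gradient f u))
        (u + (0:ℝ) • (v - u)) := by simpa using hg
    exact hg'.comp_hasDerivAt 0 hline
  have h2 : HasDerivAt (fun t : ℝ => f u + t * (f v - f u)) (f v - f u) 0 := by
    simpa using ((hasDerivAt_id (0:ℝ)).mul_const (f v - f u)).const_add (f u)
  have h1' : HasDerivAt (fun t : ℝ => f u + t * (f v - f u))
      ((InnerProductSpace.toDual ℝ F) (_root_.gradient f u) (v - u)) 0 := by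
    refine h1.congr_of_eventuallyEq ?_
    filter_upwards with t using (haff t).symm
  have := h1'.unique h2
  rw [← this, InnerProductSpace.toDual_apply_apply]

lemma inner_seg_expand (a b : F) (s : ℝ) : (⟪a + s • (b - a), a + s • (b - a)⟫ : ℝ)
      = ⟪a,a⟫ + 2*s*⟪a,b⟫ - 2*s*⟪a,a⟫ + s^2*(⟪b,b⟫ - 2*⟪a,b⟫ + ⟪a,a⟫) := by
  simp only [inner_add_left, inner_add_right, inner_sub_left, inner_sub_right,
      real_inner_smul_left, real_inner_smul_right, real_inner_comm b a]
  ring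

end helpers

section gradcomp
variable {n m p : ℕ} (f : E n → E m → ℝ) (A : E n →L[ℝ] E p) (B : E m →L[ℝ] E p)
    (c : E p) (q pp : ℝ) (yc : E m)

lemma gradx_regLag (hf : ContDiff ℝ 1 (Function.uncurry f)) (x : E n) (y : E m) (l : E p) :
    gradient (fun x' => regLag f A B c q pp yc x' y l) x
      = gradient (fun x' => f x' y) x - ContinuousLinearMap.adjoint A l := by
  have hdf : DifferentiableAt ℝ (fun x' => f x' y) x := by
    have h1 : Differentiable ℝ (Function.uncurry f) := hf.differentiable one_ne_zero
    exact (h1.comp (differentiable_id.prodMk (differentiable_const y))).differentiableAt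
  have h1 : HasGradientAt (fun x' => f x' y) (gradient (fun x' => f x' y) x) x :=
    hdf.hasGradientAt
  have h2 : HasGradientAt (fun x' : E n => ⟪l, A x'⟫) (ContinuousLinearMap.adjoint A l) x := by
    have := hasGradientAt_inner_const (ContinuousLinearMap.adjoint A l) x
    refine this.congr_of_eventuallyEq ?_
    filter_upwards with v
    rw [ContinuousLinearMap.adjoint_inner_left]
  have key : (fun x' => regLag f A B c q pp yc x' y l)
      = fun x' => (f x' y - ⟪l, A x'⟫)
          + (-⟪l, B y - c⟫ - q / 2 * ‖y‖ ^ 2 - pp / 2 * ‖y - yc‖ ^ 2) := by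
    funext x'
    have : A x' + B y - c = A x' + (B y - c) := by abel
    simp only [regLag, lag, this, inner_add_right]
    ring
  rw [key]
  exact ((h1.sub'' h2).add_const'' _).gradient_eq'

lemma gradl_regLag (x : E n) (y : E m) (l : E p) :
    gradient (fun l' => regLag f A B c q pp yc x y l') l = -(A x + B y - c) := by
  have h2 : HasGradientAt (fun l' : E p => ⟪l', A x + B y - c⟫) (A x + B y - c) l := by
    refine (hasGradientAt_inner_const (A x + B y - c) l).congr_of_eventuallyEq ?_
    filter_upwards with v using real_inner_comm _ _
  have key : (fun l' => regLag f A B c q pp yc x y l')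
      = fun l' => (f x y - q / 2 * ‖y‖ ^ 2 - pp / 2 * ‖y - yc‖ ^ 2) - ⟪l', A x + B y - c⟫ := by
    funext l'; simp only [regLag, lag]; ring
  rw [key]
  simpa using (h2.const_sub'' _).gradient_eq'

lemma regLag_segment
    (haff : ∀ (x : E n) (y₁ y₂ : E m) (t : ℝ),
      f x (y₁ + t • (y₂ - y₁)) = f x y₁ + t * (f x y₂ - f x y₁))
    (x : E n) (u v : E m) (l : E p) (t : ℝ) :
    regLag f A B c q pp yc x (u + t • (v - u)) l
      = (1 - t) * regLag f A B c q pp yc x u l + t * regLag f A B c q pp yc x v l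
        + (q + pp) / 2 * (t * (1 - t)) * ‖u - v‖ ^ 2 := by
  have hB : B (u + t • (v - u)) = B u + t • (B v - B u) := by
    simp [map_add, map_smul, map_sub]
  have hnorm : ∀ w : E m, ‖w‖ ^ 2 = ⟪w, w⟫ := fun w => (real_inner_self_eq_norm_sq w).symm
  have hyc : u + t • (v - u) - yc = (u - yc) + t • ((v - yc) - (u - yc)) := by
    have : (v - yc) - (u - yc) = v - u := by abel
    rw [this]; abel
  simp only [regLag, lag, haff x u v t, hB, hnorm, hyc, inner_seg_expand]
  simp only [inner_add_left, inner_add_right, inner_sub_left, inner_sub_right,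
      real_inner_smul_left, real_inner_smul_right, real_inner_comm v u,
      real_inner_comm yc u, real_inner_comm yc v]
  ring

lemma regLag_max_gap {Y : Set (E m)} (hYcvx : Convex ℝ Y)
    (haff : ∀ (x : E n) (y₁ y₂ : E m) (t : ℝ),
      f x (y₁ + t • (y₂ - y₁)) = f x y₁ + t * (f x y₂ - f x y₁))
    (x : E n) (l : E p) {w z : E m} (hw : w ∈ Y) (hz : z ∈ Y)
    (hmax : ∀ y ∈ Y, regLag f A B c q pp yc x y l ≤ regLag f A B c q pp yc x w l) :
    regLag f A B c q pp yc x z l + (q + pp) / 2 * ‖w - z‖ ^ 2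
      ≤ regLag f A B c q pp yc x w l := by
  set φ : E m → ℝ := fun y => regLag f A B c q pp yc x y l with hφ
  have key : ∀ t ∈ Set.Ioo (0:ℝ) 1,
      (q + pp) / 2 * (1 - t) * ‖w - z‖ ^ 2 ≤ φ w - φ z := by
    intro t ht
    have hmem : w + t • (z - w) ∈ Y := by
      have h := hYcvx hw hz (by linarith [ht.2] : (0:ℝ) ≤ 1 - t) ht.1.le (by ring)
      have e : (1 - t) • w + t • z = w + t • (z - w) := by
        rw [sub_smul, smul_sub]; module
      rwa [e] at h
    have hseg := regLag_segment f A B c q pp yc haff x w z l t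
    have hle := hmax _ hmem
    rw [show regLag f A B c q pp yc x (w + t • (z - w)) l = φ (w + t • (z - w)) from rfl] at hseg
    have h2 : t * ((q + pp) / 2 * (1 - t) * ‖w - z‖ ^ 2) ≤ t * (φ w - φ z) := by
      nlinarith [hseg, hle]
    exact le_of_mul_le_mul_left h2 ht.1
  have hlim : Filter.Tendsto (fun t : ℝ => (q + pp) / 2 * (1 - t) * ‖w - z‖ ^ 2)
      (nhdsWithin 0 (Set.Ioi 0)) (nhds ((q + pp) / 2 * (1 - 0) * ‖w - z‖ ^ 2)) := by
    apply Filter.Tendsto.mono_left _ nhdsWithin_le_nhds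
    exact Filter.Tendsto.mul (Filter.Tendsto.mul tendsto_const_nhds
      ((continuous_const.sub continuous_id).tendsto 0)) tendsto_const_nhds
  have hfin : (q + pp) / 2 * (1 - 0) * ‖w - z‖ ^ 2 ≤ φ w - φ z :=
    le_of_tendsto hlim (Filter.eventually_of_mem
      (Ioo_mem_nhdsGT_of_mem ⟨le_refl 0, one_pos⟩) key)
  simp only [sub_zero, mul_one] at hfin
  linarith

lemma ystar_dist {Y : Set (E m)} (hYcvx : Convex ℝ Y)
    (hf : ContDiff ℝ 1 (Function.uncurry f))
    (L : ℝ) (hlip : LipGrad f L)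
    (haff : ∀ (x : E n) (y₁ y₂ : E m) (t : ℝ),
      f x (y₁ + t • (y₂ - y₁)) = f x y₁ + t * (f x y₂ - f x y₁))
    (x₁ x₂ : E n) (l₁ l₂ : E p) {w₁ w₂ : E m} (hw₁ : w₁ ∈ Y) (hw₂ : w₂ ∈ Y)
    (hmax₁ : ∀ y ∈ Y, regLag f A B c q pp yc x₁ y l₁ ≤ regLag f A B c q pp yc x₁ w₁ l₁)
    (hmax₂ : ∀ y ∈ Y, regLag f A B c q pp yc x₂ y l₂ ≤ regLag f A B c q pp yc x₂ w₂ l₂) :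
    (q + pp) * ‖w₁ - w₂‖ ^ 2
      ≤ (L * ‖x₁ - x₂‖ + ‖B‖ * ‖l₁ - l₂‖) * ‖w₁ - w₂‖ := by
  have g1 := regLag_max_gap f A B c q pp yc hYcvx haff x₁ l₁ hw₁ hw₂ hmax₁
  have g2 := regLag_max_gap f A B c q pp yc hYcvx haff x₂ l₂ hw₂ hw₁ hmax₂
  rw [norm_sub_rev w₂ w₁] at g2
  have hdiff : ∀ x : E n, DifferentiableAt ℝ (f x) w₂ := by
    intro x
    have h1 : Differentiable ℝ (Function.uncurry f) := hf.differentiable one_ne_zero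
    exact ((h1.comp ((differentiable_const x).prodMk differentiable_id)).differentiableAt :)
  have fd : ∀ x : E n, f x w₁ - f x w₂ = ⟪gradient (f x) w₂, w₁ - w₂⟫ := by
    intro x
    exact affine_inner_grad w₂ w₁ (hdiff x) (fun t => haff x w₂ w₁ t)
  have expand : regLag f A B c q pp yc x₁ w₁ l₁ - regLag f A B c q pp yc x₁ w₂ l₁
      + (regLag f A B c q pp yc x₂ w₂ l₂ - regLag f A B c q pp yc x₂ w₁ l₂)
      = ⟪gradient (f x₁) w₂ - gradient (f x₂) w₂, w₁ - w₂⟫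
        - ⟪l₁ - l₂, B w₁ - B w₂⟫ := by
    have e1 := fd x₁
    have e2 := fd x₂
    simp only [regLag, lag, inner_sub_left, inner_sub_right, inner_add_right] at e1 e2 ⊢
    linarith [e1, e2]
  have bound1 : ⟪gradient (f x₁) w₂ - gradient (f x₂) w₂, w₁ - w₂⟫
      ≤ L * ‖x₁ - x₂‖ * ‖w₁ - w₂‖ := by
    calc ⟪gradient (f x₁) w₂ - gradient (f x₂) w₂, w₁ - w₂⟫
        ≤ ‖gradient (f x₁) w₂ - gradient (f x₂) w₂‖ * ‖w₁ - w₂‖ := real_inner_le_norm _ _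
      _ ≤ L * ‖x₁ - x₂‖ * ‖w₁ - w₂‖ :=
          mul_le_mul_of_nonneg_right (hlip.2.2.2 x₁ x₂ w₂) (norm_nonneg _)
  have bound2 : -⟪l₁ - l₂, B w₁ - B w₂⟫ ≤ ‖B‖ * ‖l₁ - l₂‖ * ‖w₁ - w₂‖ := by
    have h1 : -⟪l₁ - l₂, B w₁ - B w₂⟫ ≤ ‖l₁ - l₂‖ * ‖B w₁ - B w₂‖ := by
      rw [← inner_neg_right]
      calc ⟪l₁ - l₂, -(B w₁ - B w₂)⟫ ≤ ‖l₁ - l₂‖ * ‖-(B w₁ - B w₂)‖ := real_inner_le_norm _ _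
        _ = ‖l₁ - l₂‖ * ‖B w₁ - B w₂‖ := by rw [norm_neg]
    have h2 : ‖B w₁ - B w₂‖ ≤ ‖B‖ * ‖w₁ - w₂‖ := by
      rw [← map_sub]; exact B.le_opNorm _
    calc -⟪l₁ - l₂, B w₁ - B w₂⟫ ≤ ‖l₁ - l₂‖ * ‖B w₁ - B w₂‖ := h1
      _ ≤ ‖l₁ - l₂‖ * (‖B‖ * ‖w₁ - w₂‖) :=
          mul_le_mul_of_nonneg_left h2 (norm_nonneg _)
      _ = ‖B‖ * ‖l₁ - l₂‖ * ‖w₁ - w₂‖ := by ring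
  nlinarith [g1, g2, expand, bound1, bound2]

end gradcomp

lemma le_of_sq_le_sq'' {x y : ℝ} (hx : 0 ≤ x) (hy : 0 ≤ y) (h : x^2 ≤ y^2) : x ≤ y := by
  nlinarith

lemma cs2 (p q a b : ℝ) : (p*a + q*b)^2 ≤ (p^2 + q^2) * (a^2 + b^2) := by
  nlinarith [sq_nonneg (p*b - q*a)]

set_option maxHeartbeats 1000000 in
lemma lips_arith (L nA nB μ a b d g1 g2 : ℝ) (hL : 0 < L) (hA : 0 ≤ nA) (hB : 0 ≤ nB)
    (hμ : 0 < μ) (ha : 0 ≤ a) (hb : 0 ≤ b) (hd : 0 ≤ d) (hg1 : 0 ≤ g1) (hg2 : 0 ≤ g2)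
    (hdle : μ * d ≤ L*a + nB*b)
    (h1 : g1 ≤ L*a + L*d + nA*b) (h2 : g2 ≤ nA*a + nB*d) :
    Real.sqrt (g1^2 + g2^2) ≤ ((L + nA) + (L + nB)^2/μ) * Real.sqrt (a^2 + b^2) := by
  set S := Real.sqrt (a^2 + b^2) with hSdef
  have hS : 0 ≤ S := Real.sqrt_nonneg _
  have hS2 : S^2 = a^2 + b^2 := Real.sq_sqrt (by positivity)
  have hK : 0 ≤ (L + nA) + (L + nB)^2/μ := by positivity
  have hr0 : (L*a + nB*b)^2 ≤ (L + nB)^2 * (a^2 + b^2) := by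
    have := cs2 L nB a b
    have h2 : L^2 + nB^2 ≤ (L + nB)^2 := by nlinarith [mul_nonneg hL.le hB]
    nlinarith [mul_le_mul_of_nonneg_right h2 (by positivity : (0:ℝ) ≤ a^2 + b^2)]
  have hr : L*a + nB*b ≤ (L + nB)*S := by
    apply le_of_sq_le_sq'' (by positivity) (by positivity)
    rw [mul_pow, hS2]; exact hr0
  have hdS : d ≤ (L + nB)*S/μ := by
    rw [le_div_iff₀ hμ]; nlinarith
  have F1 : (L*a + nA*b)^2 + (nA*a)^2 ≤ (L + nA)^2 * S^2 := by
    nlinarith [mul_nonneg (mul_nonneg hL.le hA) (sq_nonneg (a - b)),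
      mul_nonneg (mul_nonneg hL.le hA) (sq_nonneg a),
      mul_nonneg (mul_nonneg hL.le hA) (sq_nonneg b),
      mul_nonneg (mul_nonneg hL.le hL.le) (sq_nonneg b)]
  have F3 : L*(L*a + nA*b) + nB*(nA*a) ≤ (L + nA)*(L + nB)*S := by
    apply le_of_sq_le_sq'' (by positivity) (by positivity)
    have cs : ((L^2 + nA*nB)*a + (L*nA)*b)^2
        ≤ ((L^2 + nA*nB)^2 + (L*nA)^2) * S^2 := by
      rw [hS2]; exact cs2 _ _ _ _
    have poly : (L^2 + nA*nB)^2 + (L*nA)^2 ≤ ((L + nA)*(L + nB))^2 := by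
      have e : ((L + nA)*(L + nB))^2 - ((L^2 + nA*nB)^2 + (L*nA)^2)
          = 2*L^3*nA + 2*L^3*nB + 2*L*nA^2*nB + 2*L*nA*nB^2 + 2*L^2*nA*nB + L^2*nB^2 := by
        ring
      linarith [e, mul_nonneg (mul_nonneg (mul_nonneg hL.le hL.le) hL.le) hA,
        mul_nonneg (mul_nonneg (mul_nonneg hL.le hL.le) hL.le) hB,
        mul_nonneg (mul_nonneg (mul_nonneg hL.le hA) hA) hB,
        mul_nonneg (mul_nonneg (mul_nonneg hL.le hA) hB) hB,
        mul_nonneg (mul_nonneg (mul_nonneg hL.le hL.le) hA) hB,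
        mul_nonneg (mul_nonneg hL.le hL.le) (mul_nonneg hB hB)]
    calc (L*(L*a + nA*b) + nB*(nA*a))^2 = ((L^2 + nA*nB)*a + (L*nA)*b)^2 := by ring
      _ ≤ ((L^2 + nA*nB)^2 + (L*nA)^2) * S^2 := cs
      _ ≤ ((L + nA)*(L + nB))^2 * S^2 := mul_le_mul_of_nonneg_right poly (sq_nonneg S)
      _ = ((L + nA)*(L + nB)*S)^2 := by ring
  have hXnn : 0 ≤ L*(L*a + nA*b) + nB*(nA*a) := by positivity
  have hDnn : 0 ≤ (L + nB)*S/μ := by positivity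
  have t1 : d * (L*(L*a + nA*b) + nB*(nA*a))
      ≤ ((L + nB)*S/μ) * ((L + nA)*(L + nB)*S) :=
    mul_le_mul hdS F3 hXnn hDnn
  have hd2 : d^2 ≤ ((L + nB)*S/μ)^2 := by
    apply pow_le_pow_left₀ hd hdS
  have t2 : (L^2 + nB^2) * d^2 ≤ (L + nB)^2 * ((L + nB)*S/μ)^2 := by
    have hle : L^2 + nB^2 ≤ (L + nB)^2 := by nlinarith [mul_nonneg hL.le hB]
    have := mul_le_mul hle hd2 (sq_nonneg d) (by positivity)
    linarith
  have main : g1^2 + g2^2 ≤ (((L + nA) + (L + nB)^2/μ) * S)^2 := by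
    have hu : g1^2 ≤ (L*a + L*d + nA*b)^2 := by nlinarith
    have hv : g2^2 ≤ (nA*a + nB*d)^2 := by nlinarith
    have expand : (L*a + L*d + nA*b)^2 + (nA*a + nB*d)^2
        = ((L*a + nA*b)^2 + (nA*a)^2) + 2*(d*(L*(L*a + nA*b) + nB*(nA*a)))
          + (L^2 + nB^2)*d^2 := by ring
    have rhs : (((L + nA) + (L + nB)^2/μ) * S)^2
        = (L + nA)^2*S^2 + 2*(((L + nB)*S/μ) * ((L + nA)*(L + nB)*S))
          + (L + nB)^2*((L + nB)*S/μ)^2 := by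
      field_simp
      ring
    rw [rhs]
    linarith [F1, t1, t2, hu, hv, expand.le, expand.ge]
  calc Real.sqrt (g1^2 + g2^2) ≤ Real.sqrt ((((L + nA) + (L + nB)^2/μ) * S)^2) :=
        Real.sqrt_le_sqrt main
    _ = ((L + nA) + (L + nB)^2/μ) * S := Real.sqrt_sq (by positivity)

/-- Lemma 3.2: in the nonconvex–linear setting, the gradient
`(x,λ) ↦ ∇_{x,λ}L̄(x, y*(x,λ), λ)` of `Φ̄(x,λ) = max_{y∈Y} L̄(x,y,λ)` is Lipschitz with
constant `L_A + L_B²/(q+p)`. -/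
theorem maxfun_gradient_lipschitz
    {n m p : ℕ} (Y : Set (E m))
    (hYne : Y.Nonempty) (hYcvx : Convex ℝ Y) (hYcpt : IsCompact Y)
    (f : E n → E m → ℝ) (hf : ContDiff ℝ 1 (Function.uncurry f))
    (A : E n →L[ℝ] E p) (B : E m →L[ℝ] E p) (c : E p)
    (L : ℝ) (hL : 0 < L) (hlip : LipGrad f L)
    (haff : ∀ (x : E n) (y₁ y₂ : E m) (t : ℝ),
      f x (y₁ + t • (y₂ - y₁)) = f x y₁ + t * (f x y₂ - f x y₁))
    (q pp : ℝ) (hq : 0 < q) (hpp : 0 ≤ pp) (yc : E m)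
    (ystar : E n → E p → E m)
    (hystarY : ∀ x l, ystar x l ∈ Y)
    (hystar : ∀ x l, ∀ z ∈ Y,
      regLag f A B c q pp yc x z l ≤ regLag f A B c q pp yc x (ystar x l) l) :
    ∀ (x₁ x₂ : E n) (l₁ l₂ : E p),
      Real.sqrt
          (‖gradient (fun x' => regLag f A B c q pp yc x' (ystar x₁ l₁) l₁) x₁
            - gradient (fun x' => regLag f A B c q pp yc x' (ystar x₂ l₂) l₂) x₂‖ ^ 2
          + ‖gradient (fun l' => regLag f A B c q pp yc x₁ (ystar x₁ l₁) l') l₁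
            - gradient (fun l' => regLag f A B c q pp yc x₂ (ystar x₂ l₂) l') l₂‖ ^ 2)
        ≤ ((L + ‖A‖) + (L + ‖B‖) ^ 2 / (q + pp))
            * Real.sqrt (‖x₁ - x₂‖ ^ 2 + ‖l₁ - l₂‖ ^ 2) := by
  intro x₁ x₂ l₁ l₂
  set w₁ := ystar x₁ l₁ with hw₁def
  set w₂ := ystar x₂ l₂ with hw₂def
  rw [gradx_regLag f A B c q pp yc hf x₁ w₁ l₁, gradx_regLag f A B c q pp yc hf x₂ w₂ l₂,
    gradl_regLag f A B c q pp yc x₁ w₁ l₁, gradl_regLag f A B c q pp yc x₂ w₂ l₂]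
  set a := ‖x₁ - x₂‖ with hadef
  set b := ‖l₁ - l₂‖ with hbdef
  set d := ‖w₁ - w₂‖ with hddef
  -- bound on the y-maximizer distance
  have hdist := ystar_dist f A B c q pp yc hYcvx hf L hlip haff x₁ x₂ l₁ l₂
    (hystarY x₁ l₁) (hystarY x₂ l₂) (hystar x₁ l₁) (hystar x₂ l₂)
  have hμd : (q + pp) * d ≤ L * a + ‖B‖ * b := by
    rcases (norm_nonneg (w₁ - w₂)).eq_or_lt with h0 | hpos
    · rw [← hddef] at h0
      rw [← h0]
      have : (0:ℝ) ≤ L * a + ‖B‖ * b := by positivity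
      simpa using this
    · rw [← hddef] at hpos
      have h2 : ((q + pp) * d) * d ≤ (L * a + ‖B‖ * b) * d := by nlinarith [hdist]
      exact le_of_mul_le_mul_right h2 hpos
  -- bound on the x-gradient difference
  have hgx : ‖(gradient (fun x' => f x' w₁) x₁ - ContinuousLinearMap.adjoint A l₁)
      - (gradient (fun x' => f x' w₂) x₂ - ContinuousLinearMap.adjoint A l₂)‖
      ≤ L * a + L * d + ‖A‖ * b := by
    have e : (gradient (fun x' => f x' w₁) x₁ - ContinuousLinearMap.adjoint A l₁)
        - (gradient (fun x' => f x' w₂) x₂ - ContinuousLinearMap.adjoint A l₂)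
        = (gradient (fun x' => f x' w₁) x₁ - gradient (fun x' => f x' w₁) x₂)
          + (gradient (fun x' => f x' w₁) x₂ - gradient (fun x' => f x' w₂) x₂)
          + -(ContinuousLinearMap.adjoint A (l₁ - l₂)) := by
      rw [map_sub]; abel
    rw [e]
    have h3 : ‖-(ContinuousLinearMap.adjoint A (l₁ - l₂))‖ ≤ ‖A‖ * b := by
      rw [norm_neg]
      calc ‖ContinuousLinearMap.adjoint A (l₁ - l₂)‖
          ≤ ‖ContinuousLinearMap.adjoint A‖ * ‖l₁ - l₂‖ :=
            (ContinuousLinearMap.adjoint A).le_opNorm _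
        _ = ‖A‖ * b := by
            rw [LinearIsometryEquiv.norm_map ContinuousLinearMap.adjoint A]
    calc ‖(gradient (fun x' => f x' w₁) x₁ - gradient (fun x' => f x' w₁) x₂)
          + (gradient (fun x' => f x' w₁) x₂ - gradient (fun x' => f x' w₂) x₂)
          + -(ContinuousLinearMap.adjoint A (l₁ - l₂))‖
        ≤ ‖(gradient (fun x' => f x' w₁) x₁ - gradient (fun x' => f x' w₁) x₂)
            + (gradient (fun x' => f x' w₁) x₂ - gradient (fun x' => f x' w₂) x₂)‖
          + ‖-(ContinuousLinearMap.adjoint A (l₁ - l₂))‖ := norm_add_le _ _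
      _ ≤ (‖gradient (fun x' => f x' w₁) x₁ - gradient (fun x' => f x' w₁) x₂‖
            + ‖gradient (fun x' => f x' w₁) x₂ - gradient (fun x' => f x' w₂) x₂‖)
          + ‖-(ContinuousLinearMap.adjoint A (l₁ - l₂))‖ := by
            gcongr
            exact norm_add_le _ _
      _ ≤ (L * a + L * d) + ‖A‖ * b := by
            gcongr
            · exact hlip.1 x₁ x₂ w₁
            · exact hlip.2.1 x₂ w₁ w₂
      _ = L * a + L * d + ‖A‖ * b := by ring
  -- bound on the λ-gradient difference
  have hgl : ‖(-(A x₁ + B w₁ - c)) - (-(A x₂ + B w₂ - c))‖ ≤ ‖A‖ * a + ‖B‖ * d := by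
    have e : (-(A x₁ + B w₁ - c)) - (-(A x₂ + B w₂ - c))
        = -(A (x₁ - x₂)) + -(B (w₁ - w₂)) := by
      rw [map_sub, map_sub]; abel
    rw [e]
    calc ‖-(A (x₁ - x₂)) + -(B (w₁ - w₂))‖
        ≤ ‖-(A (x₁ - x₂))‖ + ‖-(B (w₁ - w₂))‖ := norm_add_le _ _
      _ = ‖A (x₁ - x₂)‖ + ‖B (w₁ - w₂)‖ := by rw [norm_neg, norm_neg]
      _ ≤ ‖A‖ * a + ‖B‖ * d := by
          gcongr
          · exact A.le_opNorm _
          · exact B.le_opNorm _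
  exact lips_arith L ‖A‖ ‖B‖ (q + pp) a b d _ _ hL (norm_nonneg A) (norm_nonneg B)
    (by linarith) (norm_nonneg _) (norm_nonneg _) (norm_nonneg _)
    (norm_nonneg _) (norm_nonneg _) hμd hgx hgl
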